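/- Let (F,v) be a henselian valued field of equal characteristic p > 0 (char F = char Fv = p) such that: (i) (F,v) is defectless, i.e. for every finite field extension L/F and every valuation w on L extending v, [L:F] = (w(L^×) : v(F^×)) · [Lw : Fv]; (ii) the value group v(F^×) is p-divisible; (iii) every finite field extension of the residue field Fv has degree prime to p. Then F is a perfect field. -/

import Mathlib

open IsLocalRing

namespace Paper

variable {K L : Type} [Field K] [Field L]

/-- The ring homomorphism `A →+* B` induced by `f : K →+* L` when `B.comap f = A`. -/
def inducedHom (f : K →+* L) (A : ValuationSubring K) (B : ValuationSubring L)
    (h : B.comap f = A) : A →+* B where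
  toFun a := ⟨f a, by
    have ha : (a : K) ∈ B.comap f := by rw [h]; exact a.2
    exact ValuationSubring.mem_comap.mp ha⟩
  map_one' := Subtype.ext (map_one f)
  map_mul' x y := Subtype.ext (map_mul f x.1 y.1)
  map_zero' := Subtype.ext (map_zero f)
  map_add' x y := Subtype.ext (map_add f x.1 y.1)

theorem isLocalHom_inducedHom (f : K →+* L) (A : ValuationSubring K) (B : ValuationSubring L)
    (h : B.comap f = A) : IsLocalHom (inducedHom f A B h) := by
  constructor
  intro a ha
  have hane : (a : K) ≠ 0 := by
    intro h0
    have hz : (inducedHom f A B h) a = 0 := by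
      apply Subtype.ext
      show f (a : K) = 0
      rw [h0, map_zero]
    rw [hz] at ha
    exact not_isUnit_zero ha
  have hinvB : f ((a : K)⁻¹) ∈ B := by
    obtain ⟨u, hu⟩ := ha
    have h1 : ((u⁻¹ : Bˣ) : B) * (inducedHom f A B h a) = 1 := by rw [← hu]; exact u.inv_mul
    have h2 : (((u⁻¹ : Bˣ) : B) : L) * f (a : K) = 1 := congrArg Subtype.val h1
    have h3 : f ((a : K)⁻¹) = (((u⁻¹ : Bˣ) : B) : L) := by
      rw [map_inv₀]
      exact inv_eq_of_mul_eq_one_right (by rw [mul_comm]; exact h2)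
    rw [h3]
    exact (((u⁻¹ : Bˣ) : B)).2
  have hinv : (a : K)⁻¹ ∈ A := by
    have hc : (a : K)⁻¹ ∈ B.comap f := ValuationSubring.mem_comap.mpr hinvB
    rwa [h] at hc
  apply IsUnit.of_mul_eq_one (a := a) ⟨(a : K)⁻¹, hinv⟩
  apply Subtype.ext
  show (a : K) * (a : K)⁻¹ = 1
  exact mul_inv_cancel₀ hane

/-- Residue field map induced when `B.comap f = A`. -/
noncomputable def residueMap (f : K →+* L) (A : ValuationSubring K) (B : ValuationSubring L)
    (h : B.comap f = A) : ResidueField A →+* ResidueField B :=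
  letI := isLocalHom_inducedHom f A B h
  ResidueField.map (inducedHom f A B h)

/-- The ramification index `(v(L^×) : v(K^×))` for an extension of valued fields:
the index of the subgroup of `Lˣ` generated by the image of `Kˣ` together with the
units of the valuation subring `B` of `L`. -/
noncomputable def ramIdx (f : K →+* L) (B : ValuationSubring L) : ℕ :=
  ((Units.map f.toMonoidHom).range ⊔ B.unitGroup).index

/-- The residue degree `[Lv : Kv]` for an extension of valued fields. -/
noncomputable def resDeg (f : K →+* L) (A : ValuationSubring K) (B : ValuationSubring L)
    (h : B.comap f = A) : ℕ :=
  letI := (residueMap f A B h).toAlgebra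
  Module.finrank (ResidueField A) (ResidueField B)

/-- A valued field `(K, A)` is defectless if for every finite field extension `L/K` and
every valuation subring `B` of `L` lying over `A`, the fundamental equality
`[L : K] = (v(L^×) : v(K^×)) · [Lv : Kv]` holds. -/
def IsDefectless (A : ValuationSubring K) : Prop :=
  ∀ (L' : Type) [Field L'] [Algebra K L'] [FiniteDimensional K L']
    (B : ValuationSubring L') (h : B.comap (algebraMap K L') = A),
    Module.finrank K L' = ramIdx (algebraMap K L') B * resDeg (algebraMap K L') A B h

/-- The value group `v(K^×)` is `p`-divisible. -/
def PDivisibleValueGroup (p : ℕ) (A : ValuationSubring K) : Prop :=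
  ∀ x : Kˣ, ∃ y : Kˣ, x / y ^ p ∈ A.unitGroup

/-- The valuation is roughly `p`-divisible: every `γ` with `-v(p) ≤ γ ≤ v(p)` lies in `pΓ`. -/
def RoughlyPDivisible (p : ℕ) (A : ValuationSubring K) : Prop :=
  p ≠ 0 → ∀ x : Kˣ, ((p : K) * (x : K) ∈ A ∧ (p : K) / (x : K) ∈ A) →
    ∃ y : Kˣ, x / y ^ p ∈ A.unitGroup

/-- Every finite field extension of the residue field has degree prime to `p`. -/
def ResidueFiniteExtPrimeTo (p : ℕ) (A : ValuationSubring K) : Prop :=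
  ∀ (k : Type) [Field k] [Algebra (ResidueField A) k] [FiniteDimensional (ResidueField A) k],
    Nat.Coprime p (Module.finrank (ResidueField A) k)

/-- `(K, A)` is a model of `T₁` with residue characteristic `p`. -/
def IsT1Model (p : ℕ) (A : ValuationSubring K) : Prop :=
  HenselianLocalRing A ∧ IsDefectless A ∧ PerfectField K ∧ PerfectField (ResidueField A) ∧
    CharP (ResidueField A) p ∧ RoughlyPDivisible p A ∧ ResidueFiniteExtPrimeTo p A

/-! If `a ∈ F` had no `p`-th root, `L = F(a^{1/p})` would have degree `p`, so for any extension
of the valuation to `L` the fundamental equality reads `p = e · f`. Both factors are prime to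
`p`: `f` by hypothesis (iii), and `e` because `v(L^×)` is torsion-free and `v(F^×)` is
`p`-divisible, so `v(L^×) / v(F^×)` has no `p`-torsion. -/

theorem _root_.ValuationSubring.exists_comap_eq (A : ValuationSubring K) (f : K →+* L) :
    ∃ B : ValuationSubring L, B.comap f = A := by
  obtain ⟨B, hmem, hloc⟩ := IsLocalRing.exists_factor_valuationRing (f.comp A.subtype)
  refine ⟨B, le_antisymm (fun x hx => ?_) fun x hx => hmem ⟨x, hx⟩⟩
  by_contra hxA
  have hx0 : x ≠ 0 := fun h => hxA (h ▸ A.zero_mem)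
  have hinv : x⁻¹ ∈ A := (A.mem_or_inv_mem x).resolve_left hxA
  have hunit : IsUnit (⟨x⁻¹, hinv⟩ : A) := by
    refine hloc.map_nonunit _ (IsUnit.of_mul_eq_one (b := ⟨f x, hx⟩) (Subtype.ext ?_))
    simp [hx0]
  rw [ValuationSubring.valuation_eq_one_iff, map_inv₀, inv_eq_one] at hunit
  exact hxA ((A.valuation_le_one_iff x).1 hunit.le)

theorem units_map_mem_unitGroup {f : K →+* L} {A : ValuationSubring K} {B : ValuationSubring L}
    (h : B.comap f = A) {x : Kˣ} (hx : x ∈ A.unitGroup) :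
    Units.map f.toMonoidHom x ∈ B.unitGroup := by
  let u : Bˣ := Units.map (inducedHom f A B h).toMonoidHom (A.unitGroupMulEquiv ⟨x, hx⟩)
  convert (B.unitGroupMulEquiv.symm u).2
  ext
  rfl

theorem _root_.ValuationSubring.mem_unitGroup_of_pow_mem (B : ValuationSubring L) {p : ℕ}
    (hp : p ≠ 0) {u : Lˣ} (hu : u ^ p ∈ B.unitGroup) : u ∈ B.unitGroup := by
  rw [ValuationSubring.mem_unitGroup_iff, Units.val_pow_eq_pow_val, map_pow] at hu
  exact (pow_eq_one_iff.1 hu).resolve_right hp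

theorem _root_.Subgroup.coprime_index_of_pow_mem_imp_mem {G : Type*} [Group G] {N : Subgroup G}
    [N.Normal] [N.FiniteIndex] {p : ℕ} (hp : p.Prime) (h : ∀ u, u ^ p ∈ N → u ∈ N) :
    p.Coprime N.index := by
  have := Fact.mk hp
  rw [hp.coprime_iff_not_dvd, Subgroup.index_eq_card]
  intro hdvd
  obtain ⟨g, hg⟩ := exists_prime_orderOf_dvd_card' (G := G ⧸ N) p hdvd
  induction g using QuotientGroup.induction_on with | H u => ?_
  have hu : u ∈ N := h u (by
    rw [← QuotientGroup.eq_one_iff, QuotientGroup.mk_pow, ← hg, pow_orderOf_eq_one])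
  rw [(QuotientGroup.eq_one_iff u).2 hu, orderOf_one] at hg
  exact hp.one_lt.ne hg

section Extension

variable {f : K →+* L} {A : ValuationSubring K} {B : ValuationSubring L} {p : ℕ}

theorem mem_range_sup_unitGroup_of_pow_mem (h : B.comap f = A) (hp : p ≠ 0)
    (hdiv : PDivisibleValueGroup p A) {u : Lˣ}
    (hu : u ^ p ∈ (Units.map f.toMonoidHom).range ⊔ B.unitGroup) :
    u ∈ (Units.map f.toMonoidHom).range ⊔ B.unitGroup := by
  obtain ⟨_, ⟨c, rfl⟩, z, hz, hcz⟩ := Subgroup.mem_sup.1 hu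
  obtain ⟨d, hd⟩ := hdiv c
  have hw : (u / Units.map f.toMonoidHom d) ^ p ∈ B.unitGroup := by
    have : (u / Units.map f.toMonoidHom d) ^ p = Units.map f.toMonoidHom (c / d ^ p) * z := by
      rw [div_pow, ← hcz, map_div, map_pow, mul_div_right_comm]
    rw [this]
    exact B.unitGroup.mul_mem (units_map_mem_unitGroup h hd) hz
  rw [← div_mul_cancel u (Units.map f.toMonoidHom d)]
  exact Subgroup.mul_mem _ (Subgroup.mem_sup_right (B.mem_unitGroup_of_pow_mem hp hw))
    (Subgroup.mem_sup_left ⟨d, rfl⟩)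

theorem coprime_ramIdx (h : B.comap f = A) (hp : p.Prime) (hdiv : PDivisibleValueGroup p A)
    (h0 : ramIdx f B ≠ 0) : p.Coprime (ramIdx f B) :=
  haveI := Subgroup.finiteIndex_iff.2 h0
  Subgroup.coprime_index_of_pow_mem_imp_mem hp fun _ =>
    mem_range_sup_unitGroup_of_pow_mem h hp.ne_zero hdiv

theorem coprime_resDeg (h : B.comap f = A) (hres : ResidueFiniteExtPrimeTo p A)
    (h0 : resDeg f A B h ≠ 0) : p.Coprime (resDeg f A B h) := by
  let := (residueMap f A B h).toAlgebra
  have : FiniteDimensional (ResidueField A) (ResidueField B) :=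
    Module.finite_of_finrank_pos (Nat.pos_of_ne_zero h0)
  exact hres (ResidueField B)

end Extension

theorem perfectField_of_equal_char_p_general
    {F : Type} [Field F] (A : ValuationSubring F)
    (p : ℕ) (hp : p.Prime) [CharP F p]
    (hdef : IsDefectless A)
    (hdiv : PDivisibleValueGroup p A)
    (hres : ResidueFiniteExtPrimeTo p A) :
    PerfectField F := by
  have : ExpChar F p := ExpChar.prime hp
  suffices Function.Surjective (frobenius F p) by
    have := PerfectRing.ofSurjective F p this
    exact PerfectRing.toPerfectField F p
  intro a
  by_contra hroot
  have hirr : Irreducible (Polynomial.X ^ p - Polynomial.C a) :=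
    X_pow_sub_C_irreducible_of_prime hp fun b hb => hroot ⟨b, hb⟩
  have := Fact.mk hirr
  let pb := AdjoinRoot.powerBasis hirr.ne_zero
  have := pb.finite
  obtain ⟨B, hB⟩ :=
    A.exists_comap_eq (algebraMap F (AdjoinRoot (Polynomial.X ^ p - Polynomial.C a)))
  have hfund := hdef _ B hB
  rw [pb.finrank, AdjoinRoot.powerBasis_dim, Polynomial.natDegree_X_pow_sub_C] at hfund
  have he : ramIdx _ B ≠ 0 := left_ne_zero_of_mul (hfund ▸ hp.ne_zero)
  have hf : resDeg _ A B hB ≠ 0 := right_ne_zero_of_mul (hfund ▸ hp.ne_zero)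
  have hcop := (coprime_ramIdx hB hp hdiv he).mul_right (coprime_resDeg hB hres hf)
  rw [← hfund, Nat.coprime_self] at hcop
  exact hp.one_lt.ne' hcop

theorem perfectField_of_equal_char_p
    {F : Type} [Field F] (A : ValuationSubring F) [HenselianLocalRing A]
    (p : ℕ) (hp : p.Prime) [CharP F p] [CharP (ResidueField A) p]
    (hdef : IsDefectless A)
    (hdiv : PDivisibleValueGroup p A)
    (hres : ResidueFiniteExtPrimeTo p A) :
    PerfectField F :=
  perfectField_of_equal_char_p_general A p hp hdef hdiv hres

end Paper
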